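/- Let n_1 = n_2 + 1 and 2 ≤ n_s < ... < n_2. The derived sub-hypergraph H'' of H*_{n_1,...,n_s} on X'' = X* \ {(n_2, 1, ..., 1)} is a one-realization of S = {n_1, ..., n_s}, and has 2n_1 - n_s - 1 vertices. -/
import Mathlib


/-- A mixed hypergraph on vertex type `V`: families of C-edges and D-edges. -/
structure MixedHypergraph (V : Type*) where
  Cedges : Set (Set V)
  Dedges : Set (Set V)

/-- A strict `k`-coloring: a surjective coloring with `k` colors such that every
C-edge has two distinct vertices with a common color and every D-edge has two
distinct vertices with distinct colors. -/
def IsStrictColoring {V : Type*} (H : MixedHypergraph V) (k : ℕ) (f : V → Fin k) : Prop :=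
  Function.Surjective f ∧
  (∀ e ∈ H.Cedges, ∃ u ∈ e, ∃ v ∈ e, u ≠ v ∧ f u = f v) ∧
  (∀ e ∈ H.Dedges, ∃ u ∈ e, ∃ v ∈ e, u ≠ v ∧ f u ≠ f v)

/-- The feasible set of a mixed hypergraph. -/
def FeasibleSet {V : Type*} (H : MixedHypergraph V) : Set ℕ :=
  {k | ∃ f : V → Fin k, IsStrictColoring H k f}

/-- Two colorings induce the same partition of the vertex set. -/
def SamePartition {V : Type*} {k k' : ℕ} (f : V → Fin k) (g : V → Fin k') : Prop :=
  ∀ u v, f u = f v ↔ g u = g v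

/-- `H` is a one-realization of `S`: its feasible set is `S` and for each `k`
the partition induced by a strict `k`-coloring is unique. -/
def IsOneRealization {V : Type*} (H : MixedHypergraph V) (S : Set ℕ) : Prop :=
  FeasibleSet H = S ∧
  ∀ (k : ℕ) (f g : V → Fin k), IsStrictColoring H k f → IsStrictColoring H k g →
    SamePartition f g

/-- Vertex set of Construction I: `X* ⊆ [n₁] × ⋯ × [n_s]` consists of the diagonal
vertices `(i,…,i)` for `i ∈ [n_s - 1]`; for each `2 ≤ t ≤ s` and `n_t ≤ j ≤ n_{t-1}-1`
the vertices `(j,…,j,n_t,…,n_s)` and `(j,…,j,1,…,1)` (`j` repeated `t-1` times);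
and `(n₁,…,n_s)`.  (Index `t` of the paper corresponds to `t.val + 1` here.) -/
def XstarGen (s : ℕ) (n : Fin s → ℕ) : Set (Fin s → ℕ) :=
  {x | (∃ last : Fin s, (last : ℕ) + 1 = s ∧ ∃ i, 1 ≤ i ∧ i + 1 ≤ n last ∧ ∀ k, x k = i) ∨
       (∃ t u : Fin s, (u : ℕ) + 1 = (t : ℕ) ∧ ∃ j, n t ≤ j ∧ j + 1 ≤ n u ∧
         ((∀ k : Fin s, ((k : ℕ) < (t : ℕ) → x k = j) ∧ ((t : ℕ) ≤ (k : ℕ) → x k = n k)) ∨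
          (∀ k : Fin s, ((k : ℕ) < (t : ℕ) → x k = j) ∧ ((t : ℕ) ≤ (k : ℕ) → x k = 1)))) ∨
       (∀ k, x k = n k)}

/-- The Construction-I mixed hypergraph on a vertex set `X` of `s`-tuples:
D-edges are pairs of vertices differing in every coordinate, and C-edges are
triples of distinct vertices such that every coordinate takes exactly two
distinct values among the three. -/
def HstarOn {s : ℕ} (X : Set (Fin s → ℕ)) : MixedHypergraph X where
  Cedges := {e | ∃ u v w : X, u ≠ v ∧ u ≠ w ∧ v ≠ w ∧ e = {u, v, w} ∧
    ∀ k : Fin s, ({(u : Fin s → ℕ) k, (v : Fin s → ℕ) k, (w : Fin s → ℕ) k} : Finset ℕ).card = 2}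
  Dedges := {e | ∃ u v : X, e = {u, v} ∧ ∀ k : Fin s, (u : Fin s → ℕ) k ≠ (v : Fin s → ℕ) k}

namespace HRZ

set_option linter.unusedSectionVars false

variable {s : ℕ} {n : Fin s → ℕ} {N0 N1 Ns : ℕ}

/-- The "a"-type vertex at level `j`. -/
def Av (n : Fin s → ℕ) (j : ℕ) : Fin s → ℕ := fun k => if n k ≤ j then n k else j
/-- The "b"-type vertex at level `j`. -/
def Bv (n : Fin s → ℕ) (j : ℕ) : Fin s → ℕ := fun k => if n k ≤ j then 1 else j

section
variable (hs : 2 ≤ s) (hanti : StrictAnti n)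
  (hN0 : ∀ k : Fin s, (k : ℕ) = 0 → n k = N0)
  (hN1 : ∀ k : Fin s, (k : ℕ) = 1 → n k = N1)
  (hNs : ∀ k : Fin s, (k : ℕ) = s - 1 → n k = Ns)
  (h2 : 2 ≤ Ns) (heq : N0 = N1 + 1)

include hs hanti hN0 hN1 hNs h2 heq

lemma lb (k : Fin s) : Ns ≤ n k := by
  have h := hNs ⟨s-1, by omega⟩ rfl
  have h' : n k ≥ n ⟨s-1, by omega⟩ :=
    hanti.antitone (by rw [Fin.le_def]; have := k.isLt; simp; omega)
  omega

lemma ub (k : Fin s) : n k ≤ N0 := by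
  have h := hN0 ⟨0, by omega⟩ rfl
  have h' : n k ≤ n ⟨0, by omega⟩ := hanti.antitone (by rw [Fin.le_def]; exact Nat.zero_le _)
  omega

lemma ub1 (k : Fin s) (hk : (k : ℕ) ≠ 0) : n k ≤ N1 := by
  have h := hN1 ⟨1, by omega⟩ rfl
  have h' : n k ≤ n ⟨1, by omega⟩ := hanti.antitone (by rw [Fin.le_def]; simp; omega)
  omega

lemma NsN1 : Ns ≤ N1 := by
  have := lb hs hanti hN0 hN1 hNs h2 heq ⟨1, by omega⟩
  have h := hN1 ⟨1, by omega⟩ rfl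
  omega

lemma nk2 (k : Fin s) : 2 ≤ n k := le_trans h2 (lb hs hanti hN0 hN1 hNs h2 heq k)

lemma removed_eq :
    (fun k : Fin s => if (k : ℕ) = 0 then N1 else 1) = Bv n N1 := by
  funext k
  simp only [Bv]
  by_cases hk : (k : ℕ) = 0
  · have h0 : n k = N0 := hN0 k hk
    rw [if_pos hk, if_neg (by omega)]
  · have h1 : n k ≤ N1 := ub1 hs hanti hN0 hN1 hNs h2 heq k hk
    rw [if_neg hk, if_pos h1]

/-- every level in `[Ns, N0)` has a tier -/
lemma tier_exists {j : ℕ} (hj1 : Ns ≤ j) (hj2 : j < N0) :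
    ∃ t : Fin s, 0 < (t : ℕ) ∧ n t ≤ j ∧ ∀ u : Fin s, (u : ℕ) = (t : ℕ) - 1 → j < n u := by
  have key : ∀ m, ∀ h : m < s, n ⟨m, h⟩ ≤ j →
      ∃ t : Fin s, 0 < (t : ℕ) ∧ n t ≤ j ∧ ∀ u : Fin s, (u : ℕ) = (t : ℕ) - 1 → j < n u := by
    intro m
    induction m with
    | zero =>
      intro h hle
      have := hN0 ⟨0, h⟩ rfl
      omega
    | succ m ih =>
      intro h hle
      by_cases hm : n ⟨m, by omega⟩ ≤ j
      · exact ih (by omega) hm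
      · refine ⟨⟨m+1, h⟩, Nat.succ_pos m, hle, ?_⟩
        intro u hu
        have hu' : u = ⟨m, by omega⟩ := Fin.ext (by simpa using hu)
        rw [hu']
        omega
  refine key (s-1) (by omega) ?_
  have := hNs ⟨s-1, by omega⟩ rfl
  omega

lemma Xchar :
    XstarGen s n = Av n '' Set.Icc 1 N0 ∪ Bv n '' Set.Icc Ns (N0 - 1) := by
  have hN0' := hN0 ⟨0, by omega⟩ rfl
  have hNs' := hNs ⟨s-1, by omega⟩ rfl
  have hNsN1 := NsN1 hs hanti hN0 hN1 hNs h2 heq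
  ext x
  constructor
  · rintro (⟨last, hlast, i, hi1, hi2, hx⟩ | ⟨t, u, hut, j, hjt, hju, hx | hx⟩ | hx)
    · -- diagonal
      have hlast' : n last = Ns := hNs last (by omega)
      left
      refine ⟨i, ⟨hi1, by omega⟩, ?_⟩
      funext k
      have : ¬ n k ≤ i := by
        have := lb hs hanti hN0 hN1 hNs h2 heq k
        omega
      simp [Av, this, hx k]
    · -- A-type at level j
      left
      refine ⟨j, ⟨by have := nk2 hs hanti hN0 hN1 hNs h2 heq t; omega,
        by have := ub hs hanti hN0 hN1 hNs h2 heq u; omega⟩, ?_⟩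
      funext k
      by_cases hk : (k : ℕ) < (t : ℕ)
      · have h1 : ¬ n k ≤ j := by
          have : n u ≤ n k := hanti.antitone (by rw [Fin.le_def]; omega)
          omega
        simp [Av, h1, (hx k).1 hk]
      · have h1 : n k ≤ j := by
          have : n k ≤ n t := hanti.antitone (by rw [Fin.le_def]; omega)
          omega
        simp [Av, h1, (hx k).2 (by omega)]
    · -- B-type at level j
      right
      refine ⟨j, ⟨?_, ?_⟩, ?_⟩
      · have := lb hs hanti hN0 hN1 hNs h2 heq t
        omega
      · have := ub hs hanti hN0 hN1 hNs h2 heq u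
        omega
      funext k
      by_cases hk : (k : ℕ) < (t : ℕ)
      · have h1 : ¬ n k ≤ j := by
          have : n u ≤ n k := hanti.antitone (by rw [Fin.le_def]; omega)
          omega
        simp [Bv, h1, (hx k).1 hk]
      · have h1 : n k ≤ j := by
          have : n k ≤ n t := hanti.antitone (by rw [Fin.le_def]; omega)
          omega
        simp [Bv, h1, (hx k).2 (by omega)]
    · -- top
      left
      refine ⟨N0, ⟨by omega, le_refl _⟩, ?_⟩
      funext k
      have := ub hs hanti hN0 hN1 hNs h2 heq k
      simp [Av, this, hx k]
  · rintro (⟨j, ⟨hj1, hj2⟩, rfl⟩ | ⟨j, ⟨hj1, hj2⟩, rfl⟩)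
    · -- A-type vertices
      by_cases hsmall : j < Ns
      · -- diagonal
        left
        refine ⟨⟨s-1, by omega⟩, by simp; omega, j, hj1, by omega, fun k => ?_⟩
        have : ¬ n k ≤ j := by
          have := lb hs hanti hN0 hN1 hNs h2 heq k
          omega
        simp [Av, this]
      · by_cases htop : j = N0
        · right; right
          intro k
          have : n k ≤ j := by
            have := ub hs hanti hN0 hN1 hNs h2 heq k
            omega
          simp [Av, this]
        · -- middle A
          right; left
          push_neg at hsmall
          obtain ⟨t, htpos, htle, htgt⟩ :=
            tier_exists hs hanti hN0 hN1 hNs h2 heq hsmall (by omega)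
          refine ⟨t, ⟨(t:ℕ) - 1, by omega⟩, by simp; omega, j, htle, ?_, Or.inl ?_⟩
          · have := htgt ⟨(t:ℕ)-1, by omega⟩ rfl
            omega
          intro k
          constructor
          · intro hk
            have hnk : ¬ n k ≤ j := by
              have h1 : n ⟨(t:ℕ)-1, by omega⟩ ≤ n k :=
                hanti.antitone (by rw [Fin.le_def]; simp; omega)
              have := htgt ⟨(t:ℕ)-1, by omega⟩ rfl
              omega
            simp [Av, hnk]
          · intro hk
            have hnk : n k ≤ j := by
              have : n k ≤ n t := hanti.antitone (by rw [Fin.le_def]; omega)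
              omega
            simp [Av, hnk]
    · -- B-type vertices
      right; left
      obtain ⟨t, htpos, htle, htgt⟩ :=
        tier_exists hs hanti hN0 hN1 hNs h2 heq hj1 (by omega)
      refine ⟨t, ⟨(t:ℕ) - 1, by omega⟩, by simp; omega, j, htle, ?_, Or.inr ?_⟩
      · have := htgt ⟨(t:ℕ)-1, by omega⟩ rfl
        omega
      intro k
      constructor
      · intro hk
        have hnk : ¬ n k ≤ j := by
          have h1 : n ⟨(t:ℕ)-1, by omega⟩ ≤ n k :=
            hanti.antitone (by rw [Fin.le_def]; simp; omega)
          have := htgt ⟨(t:ℕ)-1, by omega⟩ rfl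
          omega
        simp [Bv, hnk]
      · intro hk
        have hnk : n k ≤ j := by
          have : n k ≤ n t := hanti.antitone (by rw [Fin.le_def]; omega)
          omega
        simp [Bv, hnk]

end

/-- X'' : the vertex set with the vertex `(N1,1,...,1)` removed. -/
def XD (s : ℕ) (n : Fin s → ℕ) (N1 : ℕ) : Set (Fin s → ℕ) :=
  XstarGen s n \ {fun k : Fin s => if (k : ℕ) = 0 then N1 else 1}

section
variable {s : ℕ} {n : Fin s → ℕ} {N0 N1 Ns : ℕ}
variable (hs : 2 ≤ s) (hanti : StrictAnti n)
  (hN0 : ∀ k : Fin s, (k : ℕ) = 0 → n k = N0)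
  (hN1 : ∀ k : Fin s, (k : ℕ) = 1 → n k = N1)
  (hNs : ∀ k : Fin s, (k : ℕ) = s - 1 → n k = Ns)
  (h2 : 2 ≤ Ns) (heq : N0 = N1 + 1)

include hs hanti hN0 hN1 hNs h2 heq

lemma Av_zero {j : ℕ} (hj : j ≤ N0) {k : Fin s} (hk : (k : ℕ) = 0) : Av n j k = j := by
  have := hN0 k hk
  simp only [Av]; split <;> omega

lemma Bv_zero {j : ℕ} (hj : j < N0) {k : Fin s} (hk : (k : ℕ) = 0) : Bv n j k = j := by
  have := hN0 k hk
  simp only [Bv]; split <;> omega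

lemma Av_last {j : ℕ} (hj : Ns ≤ j) {k : Fin s} (hk : (k : ℕ) = s - 1) : Av n j k = Ns := by
  have := hNs k hk
  simp only [Av]; split <;> omega

lemma Bv_last {j : ℕ} (hj : Ns ≤ j) {k : Fin s} (hk : (k : ℕ) = s - 1) : Bv n j k = 1 := by
  have := hNs k hk
  simp only [Bv]; split <;> omega

lemma Av_ne_Bv {j j' : ℕ} (hj : j ≤ N0) (hj'1 : Ns ≤ j') (hj'2 : j' < N0) :
    Av n j ≠ Bv n j' := by
  intro h
  have h0 := congrFun h ⟨0, by omega⟩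
  rw [Av_zero hs hanti hN0 hN1 hNs h2 heq hj rfl,
      Bv_zero hs hanti hN0 hN1 hNs h2 heq hj'2 rfl] at h0
  have h1 := congrFun h ⟨s-1, by omega⟩
  rw [Av_last hs hanti hN0 hN1 hNs h2 heq (by omega) rfl,
      Bv_last hs hanti hN0 hN1 hNs h2 heq hj'1 rfl] at h1
  omega

lemma Av_inj {j j' : ℕ} (hj : j ≤ N0) (hj' : j' ≤ N0) (h : Av n j = Av n j') : j = j' := by
  have h0 := congrFun h ⟨0, by omega⟩
  rwa [Av_zero hs hanti hN0 hN1 hNs h2 heq hj rfl,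
      Av_zero hs hanti hN0 hN1 hNs h2 heq hj' rfl] at h0

lemma Bv_inj {j j' : ℕ} (hj : j < N0) (hj' : j' < N0) (h : Bv n j = Bv n j') : j = j' := by
  have h0 := congrFun h ⟨0, by omega⟩
  rwa [Bv_zero hs hanti hN0 hN1 hNs h2 heq hj rfl,
      Bv_zero hs hanti hN0 hN1 hNs h2 heq hj' rfl] at h0

lemma XDchar :
    XD s n N1 = Av n '' Set.Icc 1 N0
      ∪ Bv n '' (Set.Icc Ns (N0 - 1) \ {N1}) := by
  have hNsN1 := NsN1 hs hanti hN0 hN1 hNs h2 heq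
  rw [XD, removed_eq hs hanti hN0 hN1 hNs h2 heq, Xchar hs hanti hN0 hN1 hNs h2 heq]
  ext x
  simp only [Set.mem_diff, Set.mem_union, Set.mem_image, Set.mem_singleton_iff]
  constructor
  · rintro ⟨⟨j, hj, rfl⟩ | ⟨j, hj, rfl⟩, hne⟩
    · exact Or.inl ⟨j, hj, rfl⟩
    · refine Or.inr ⟨j, ⟨hj, ?_⟩, rfl⟩
      intro hjN1
      exact hne (by rw [hjN1])
  · rintro (⟨j, hj, rfl⟩ | ⟨j, ⟨hj, hjne⟩, rfl⟩)
    · refine ⟨Or.inl ⟨j, hj, rfl⟩, ?_⟩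
      exact Av_ne_Bv hs hanti hN0 hN1 hNs h2 heq hj.2 (by omega) (by omega)
    · refine ⟨Or.inr ⟨j, hj, rfl⟩, ?_⟩
      intro h
      have := Bv_inj hs hanti hN0 hN1 hNs h2 heq (by have := hj.2; omega) (by omega) h
      exact hjne (by simpa using this)

lemma memA {j : ℕ} (hj1 : 1 ≤ j) (hj2 : j ≤ N0) : Av n j ∈ XD s n N1 := by
  rw [XDchar hs hanti hN0 hN1 hNs h2 heq]
  exact Or.inl ⟨j, ⟨hj1, hj2⟩, rfl⟩

lemma memB {j : ℕ} (hj1 : Ns ≤ j) (hj2 : j < N0) (hj3 : j ≠ N1) : Bv n j ∈ XD s n N1 := by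
  rw [XDchar hs hanti hN0 hN1 hNs h2 heq]
  exact Or.inr ⟨j, ⟨⟨hj1, by omega⟩, hj3⟩, rfl⟩

lemma exhaust {x : Fin s → ℕ} (hx : x ∈ XD s n N1) :
    (∃ j, 1 ≤ j ∧ j ≤ N0 ∧ x = Av n j) ∨
    (∃ j, Ns ≤ j ∧ j < N0 ∧ j ≠ N1 ∧ x = Bv n j) := by
  rw [XDchar hs hanti hN0 hN1 hNs h2 heq] at hx
  rcases hx with ⟨j, hj, rfl⟩ | ⟨j, ⟨hj, hjne⟩, rfl⟩
  · exact Or.inl ⟨j, hj.1, hj.2, rfl⟩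
  · exact Or.inr ⟨j, hj.1, by have := hj.2; omega, hjne, rfl⟩

lemma XD_ncard : (XD s n N1).ncard = 2 * N0 - Ns - 1 := by
  have hNsN1 := NsN1 hs hanti hN0 hN1 hNs h2 heq
  rw [XDchar hs hanti hN0 hN1 hNs h2 heq]
  have hIA : Set.Icc 1 N0 = ↑(Finset.Icc 1 N0) := by rw [Finset.coe_Icc]
  have hIB : Set.Icc Ns (N0 - 1) \ {N1} = ↑(Finset.Icc Ns (N0 - 1) \ {N1}) := by
    rw [Finset.coe_sdiff, Finset.coe_Icc, Finset.coe_singleton]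
  have hinjA : Set.InjOn (Av n) (Set.Icc 1 N0) := fun a ha b hb hab =>
    Av_inj hs hanti hN0 hN1 hNs h2 heq ha.2 hb.2 hab
  have hinjB : Set.InjOn (Bv n) (Set.Icc Ns (N0 - 1) \ {N1}) := fun a ha b hb hab =>
    Bv_inj hs hanti hN0 hN1 hNs h2 heq (by have := ha.1.2; omega) (by have := hb.1.2; omega) hab
  have hdisj : Disjoint (Av n '' Set.Icc 1 N0)
      (Bv n '' (Set.Icc Ns (N0 - 1) \ {N1})) := by
    rw [Set.disjoint_left]
    rintro x ⟨j, hj, rfl⟩ ⟨j', hj', hEq⟩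
    exact Av_ne_Bv hs hanti hN0 hN1 hNs h2 heq hj.2 hj'.1.1 (by have := hj'.1.2; omega) hEq.symm
  rw [Set.ncard_union_eq hdisj
      (Set.Finite.image _ (Set.finite_Icc _ _))
      (Set.Finite.image _ ((Set.finite_Icc _ _).subset Set.diff_subset)),
    Set.ncard_image_of_injOn hinjA, Set.ncard_image_of_injOn hinjB, hIA, hIB,
    Set.ncard_coe_finset, Set.ncard_coe_finset,
    Finset.card_sdiff_of_subset (by simp; omega), Nat.card_Icc, Nat.card_Icc]
  simp
  omega

end

lemma c3a {x y : ℕ} (h : x ≠ y) : ({x, y, x} : Finset ℕ).card = 2 := by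
  rw [Finset.card_eq_two]
  exact ⟨x, y, h, by ext a; simp; try tauto⟩

lemma c3b {x y : ℕ} (h : x ≠ y) : ({x, x, y} : Finset ℕ).card = 2 := by
  rw [Finset.card_eq_two]
  exact ⟨x, y, h, by ext a; simp; try tauto⟩

lemma c3c {x y : ℕ} (h : x ≠ y) : ({x, y, y} : Finset ℕ).card = 2 := by
  rw [Finset.card_eq_two]
  exact ⟨x, y, h, by ext a; simp; try tauto⟩

lemma card2_cases {a b c : ℕ} (h : ({a, b, c} : Finset ℕ).card = 2) :
    a = b ∨ a = c ∨ b = c := by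
  by_contra hc
  push_neg at hc
  rw [Finset.card_insert_of_notMem (by simp [hc.1, hc.2.1]),
      Finset.card_insert_of_notMem (by simp [hc.2.2]), Finset.card_singleton] at h
  omega

section
variable {s : ℕ} {X : Set (Fin s → ℕ)} {k : ℕ} {f : ↥X → Fin k}

lemma Dapp (hf : IsStrictColoring (HstarOn X) k f) (u v : ↥X)
    (hne : ∀ k' : Fin s, (u : Fin s → ℕ) k' ≠ (v : Fin s → ℕ) k') : f u ≠ f v := by
  obtain ⟨-, -, hD⟩ := hf
  obtain ⟨x, hx, y, hy, hxy, hfxy⟩ := hD {u, v} ⟨u, v, rfl, hne⟩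
  simp only [Set.mem_insert_iff, Set.mem_singleton_iff] at hx hy
  rcases hx with rfl | rfl <;> rcases hy with rfl | rfl
  · exact absurd rfl hxy
  · exact hfxy
  · exact fun h => hfxy h.symm
  · exact absurd rfl hxy

lemma Capp (hf : IsStrictColoring (HstarOn X) k f) (u v w : ↥X)
    (huv : u ≠ v) (huw : u ≠ w) (hvw : v ≠ w)
    (hcard : ∀ k' : Fin s,
      ({(u : Fin s → ℕ) k', (v : Fin s → ℕ) k', (w : Fin s → ℕ) k'} : Finset ℕ).card = 2) :
    f u = f v ∨ f u = f w ∨ f v = f w := by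
  obtain ⟨-, hC, -⟩ := hf
  obtain ⟨x, hx, y, hy, hxy, hfxy⟩ := hC {u, v, w} ⟨u, v, w, huv, huw, hvw, rfl, hcard⟩
  simp only [Set.mem_insert_iff, Set.mem_singleton_iff] at hx hy
  rcases hx with rfl | rfl | rfl <;> rcases hy with rfl | rfl | rfl <;>
    first
      | exact absurd rfl hxy
      | exact Or.inl hfxy
      | exact Or.inl hfxy.symm
      | exact Or.inr (Or.inl hfxy)
      | exact Or.inr (Or.inl hfxy.symm)
      | exact Or.inr (Or.inr hfxy)
      | exact Or.inr (Or.inr hfxy.symm)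

end

section
variable {s : ℕ} {n : Fin s → ℕ} {N0 N1 Ns : ℕ}
variable (hs : 2 ≤ s) (hanti : StrictAnti n)
  (hN0 : ∀ k : Fin s, (k : ℕ) = 0 → n k = N0)
  (hN1 : ∀ k : Fin s, (k : ℕ) = 1 → n k = N1)
  (hNs : ∀ k : Fin s, (k : ℕ) = s - 1 → n k = Ns)
  (h2 : 2 ≤ Ns) (heq : N0 = N1 + 1)
include hs hanti hN0 hN1 hNs h2 heq

lemma LD1 {j j' : ℕ} (h1 : j < Ns) (hne : j ≠ j') (k : Fin s) :
    Av n j k ≠ Av n j' k := by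
  have hk := lb hs hanti hN0 hN1 hNs h2 heq k
  simp only [Av]
  split <;> split <;> omega

lemma LD2 {j j' : ℕ} (h1 : 2 ≤ j) (hne : j ≠ j') (k : Fin s) :
    Av n j k ≠ Bv n j' k := by
  have hk := nk2 hs hanti hN0 hN1 hNs h2 heq k
  simp only [Av, Bv]
  split <;> split <;> omega

lemma Av_one (k : Fin s) : Av n 1 k = 1 := by
  have hk := nk2 hs hanti hN0 hN1 hNs h2 heq k
  simp only [Av]
  split <;> omega

lemma LC3 {j : ℕ} (hj : Ns ≤ j) (k : Fin s) :
    ({Av n j k, Bv n j k, Av n 1 k} : Finset ℕ).card = 2 := by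
  have hk := nk2 hs hanti hN0 hN1 hNs h2 heq k
  rw [Av_one hs hanti hN0 hN1 hNs h2 heq k]
  by_cases h : n k ≤ j
  · rw [show Av n j k = n k from by simp [Av, h], show Bv n j k = 1 from by simp [Bv, h]]
    exact c3c (by omega)
  · rw [show Av n j k = j from by simp [Av, h], show Bv n j k = j from by simp [Bv, h]]
    exact c3b (by omega)

lemma LC1 {j j' : ℕ} (hj : Ns ≤ j) (hlt : j < j') (k : Fin s) :
    ({Av n j k, Bv n j k, Av n j' k} : Finset ℕ).card = 2 := by
  have hk := nk2 hs hanti hN0 hN1 hNs h2 heq k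
  by_cases h : n k ≤ j
  · rw [show Av n j k = n k from by simp [Av, h], show Bv n j k = 1 from by simp [Bv, h],
        show Av n j' k = n k from by simp [Av]; omega]
    exact c3a (by omega)
  · rw [show Av n j k = j from by simp [Av, h], show Bv n j k = j from by simp [Bv, h]]
    have : Av n j' k ≠ j := by simp only [Av]; split <;> omega
    exact c3b (Ne.symm this)

lemma LC4 {j j' : ℕ} (hj : Ns ≤ j) (hj' : 2 ≤ j') (hne : j ≠ j')
    (hcond : ∀ k' : Fin s, n k' ≤ j → n k' ≤ j') (k : Fin s) :
    ({Av n j k, Bv n j k, Bv n j' k} : Finset ℕ).card = 2 := by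
  have hk := nk2 hs hanti hN0 hN1 hNs h2 heq k
  by_cases h : n k ≤ j
  · rw [show Av n j k = n k from by simp [Av, h], show Bv n j k = 1 from by simp [Bv, h],
        show Bv n j' k = 1 from by simp [Bv, hcond k h]]
    exact c3c (by omega)
  · rw [show Av n j k = j from by simp [Av, h], show Bv n j k = j from by simp [Bv, h]]
    have : Bv n j' k ≠ j := by simp only [Bv]; split <;> omega
    exact c3b (Ne.symm this)

end

open Classical in
noncomputable def av {s : ℕ} (n : Fin s → ℕ) (N1 : ℕ) [Nonempty ↥(XD s n N1)] (j : ℕ) :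
    ↥(XD s n N1) :=
  if h : Av n j ∈ XD s n N1 then ⟨Av n j, h⟩ else Classical.arbitrary _

open Classical in
noncomputable def bv {s : ℕ} (n : Fin s → ℕ) (N1 : ℕ) [Nonempty ↥(XD s n N1)] (j : ℕ) :
    ↥(XD s n N1) :=
  if h : Bv n j ∈ XD s n N1 then ⟨Bv n j, h⟩ else Classical.arbitrary _

lemma av_val {s : ℕ} {n : Fin s → ℕ} {N1 : ℕ} [Nonempty ↥(XD s n N1)] {j : ℕ}
    (h : Av n j ∈ XD s n N1) : (av n N1 j : Fin s → ℕ) = Av n j := by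
  rw [av, dif_pos h]

lemma bv_val {s : ℕ} {n : Fin s → ℕ} {N1 : ℕ} [Nonempty ↥(XD s n N1)] {j : ℕ}
    (h : Bv n j ∈ XD s n N1) : (bv n N1 j : Fin s → ℕ) = Bv n j := by
  rw [bv, dif_pos h]

section
variable {s : ℕ} {n : Fin s → ℕ} {N0 N1 Ns : ℕ}
variable (hs : 2 ≤ s) (hanti : StrictAnti n)
  (hN0 : ∀ k : Fin s, (k : ℕ) = 0 → n k = N0)
  (hN1 : ∀ k : Fin s, (k : ℕ) = 1 → n k = N1)
  (hNs : ∀ k : Fin s, (k : ℕ) = s - 1 → n k = Ns)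
  (h2 : 2 ≤ Ns) (heq : N0 = N1 + 1)
include hs hanti hN0 hN1 hNs h2 heq

set_option maxHeartbeats 1000000 in
lemma key {k : ℕ} {f : ↥(XD s n N1) → Fin k}
    (hf : IsStrictColoring (HstarOn (XD s n N1)) k f) :
    ∃ t : Fin s, n t = k ∧
      ∀ u v : ↥(XD s n N1), (f u = f v ↔ (u : Fin s → ℕ) t = (v : Fin s → ℕ) t) := by
  classical
  have hNsN1 := NsN1 hs hanti hN0 hN1 hNs h2 heq
  have hNs2 : 2 ≤ N0 := by omega
  haveI hnem : Nonempty ↥(XD s n N1) :=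
    ⟨⟨Av n 1, memA hs hanti hN0 hN1 hNs h2 heq le_rfl (by omega)⟩⟩
  -- f-values of the canonical vertices
  let fa : ℕ → Fin k := fun j => f (av n N1 j)
  let fb : ℕ → Fin k := fun j => f (bv n N1 j)
  have haval : ∀ {j : ℕ}, 1 ≤ j → j ≤ N0 → (av n N1 j : Fin s → ℕ) = Av n j :=
    fun {j} h1 h2' => av_val (memA hs hanti hN0 hN1 hNs h2 heq h1 h2')
  have hbval : ∀ {j : ℕ}, Ns ≤ j → j < N0 → j ≠ N1 → (bv n N1 j : Fin s → ℕ) = Bv n j :=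
    fun {j} h1 h2' h3 => bv_val (memB hs hanti hN0 hN1 hNs h2 heq h1 h2' h3)
  -- D-edge consequences
  have hAA : ∀ j j', 1 ≤ j → j < Ns → 1 ≤ j' → j' ≤ N0 → j ≠ j' → fa j ≠ fa j' := by
    intro j j' h1 h1' h3 h4 h5
    refine Dapp hf _ _ ?_
    intro k'
    rw [haval h1 (by omega), haval h3 h4]
    exact LD1 hs hanti hN0 hN1 hNs h2 heq h1' h5 k'
  have hAB : ∀ j j', 2 ≤ j → j ≤ N0 → Ns ≤ j' → j' < N0 → j' ≠ N1 → j ≠ j' →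
      fa j ≠ fb j' := by
    intro j j' h1 h1' h3 h4 h5 h6
    refine Dapp hf _ _ ?_
    intro k'
    rw [haval (by omega) h1', hbval h3 h4 h5]
    exact LD2 hs hanti hN0 hN1 hNs h2 heq h1 h6 k'
  -- subtype-level distinctness
  have haane : ∀ {j j' : ℕ}, 1 ≤ j → j ≤ N0 → 1 ≤ j' → j' ≤ N0 → j ≠ j' →
      av n N1 j ≠ av n N1 j' := by
    intro j j' h1 h1' h3 h4 h5 hcon
    have := congrArg Subtype.val hcon
    rw [haval h1 h1', haval h3 h4] at this
    exact h5 (Av_inj hs hanti hN0 hN1 hNs h2 heq h1' h4 this)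
  have habne : ∀ {j j' : ℕ}, 1 ≤ j → j ≤ N0 → Ns ≤ j' → j' < N0 → j' ≠ N1 →
      av n N1 j ≠ bv n N1 j' := by
    intro j j' h1 h1' h3 h4 h5 hcon
    have := congrArg Subtype.val hcon
    rw [haval h1 h1', hbval h3 h4 h5] at this
    exact Av_ne_Bv hs hanti hN0 hN1 hNs h2 heq h1' h3 h4 this
  have hbbne : ∀ {j j' : ℕ}, Ns ≤ j → j < N0 → j ≠ N1 → Ns ≤ j' → j' < N0 → j' ≠ N1 →
      j ≠ j' → bv n N1 j ≠ bv n N1 j' := by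
    intro j j' h1 h1' h3 h4 h5 h6 h7 hcon
    have := congrArg Subtype.val hcon
    rw [hbval h1 h1' h3, hbval h4 h5 h6] at this
    exact h7 (Bv_inj hs hanti hN0 hN1 hNs h2 heq h1' h5 this)
  -- C-edge consequences
  have hC2 : ∀ j, Ns ≤ j → j < N0 → j ≠ N1 → (fb j = fa j ∨ fb j = fa 1) := by
    intro j h1 h1' h3
    have hres := Capp hf (av n N1 j) (bv n N1 j) (av n N1 1)
      (habne (by omega) (by omega) h1 h1' h3)
      (haane (by omega) (by omega) le_rfl (by omega) (by omega))
      ((habne le_rfl (by omega) h1 h1' h3).symm)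
      (by
        intro k'
        rw [haval (by omega) (by omega), hbval h1 h1' h3, haval le_rfl (by omega)]
        exact LC3 hs hanti hN0 hN1 hNs h2 heq h1 k')
    rcases hres with h | h | h
    · exact Or.inl h.symm
    · exact absurd h.symm (hAA 1 j le_rfl (by omega) (by omega) (by omega) (by omega))
    · exact Or.inr h
  have hC1 : ∀ j j', Ns ≤ j → j < N0 → j ≠ N1 → j < j' → j' ≤ N0 →
      (fa j = fb j ∨ fa j' = fa j) := by
    intro j j' h1 h1' h3 h4 h5
    have hres := Capp hf (av n N1 j) (bv n N1 j) (av n N1 j')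
      (habne (by omega) (by omega) h1 h1' h3)
      (haane (by omega) (by omega) (by omega) h5 (by omega))
      ((habne (by omega) h5 h1 h1' h3).symm)
      (by
        intro k'
        rw [haval (by omega) (by omega), hbval h1 h1' h3, haval (by omega) h5]
        exact LC1 hs hanti hN0 hN1 hNs h2 heq h1 h4 k')
    rcases hres with h | h | h
    · exact Or.inl h
    · exact Or.inr h.symm
    · exact absurd h.symm (hAB j' j (by omega) h5 h1 h1' h3 (by omega))
  have hC4 : ∀ j j', Ns ≤ j → j < N0 → j ≠ N1 → Ns ≤ j' → j' < N0 → j' ≠ N1 → j ≠ j' →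
      (∀ k' : Fin s, n k' ≤ j → n k' ≤ j') → (fa j = fb j ∨ fb j' = fb j) := by
    intro j j' h1 h1' h3 h4 h5 h6 h7 hcond
    have hres := Capp hf (av n N1 j) (bv n N1 j) (bv n N1 j')
      (habne (by omega) (by omega) h1 h1' h3)
      (habne (by omega) (by omega) h4 h5 h6)
      (hbbne h1 h1' h3 h4 h5 h6 h7)
      (by
        intro k'
        rw [haval (by omega) (by omega), hbval h1 h1' h3, hbval h4 h5 h6]
        exact LC4 hs hanti hN0 hN1 hNs h2 heq h1 (by omega) h7 hcond k')
    rcases hres with h | h | h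
    · exact Or.inl h
    · exact absurd h (hAB j j' (by omega) (by omega) h4 h5 h6 h7)
    · exact Or.inr h.symm
  -- the threshold c
  have hex : ∃ m, Ns ≤ m ∧ m ≤ N0 ∧ fa m = fa N0 := ⟨N0, by omega, le_rfl, rfl⟩
  set c := Nat.find hex with hcdef
  obtain ⟨hcNs, hcN0, hcT⟩ : Ns ≤ c ∧ c ≤ N0 ∧ fa c = fa N0 := Nat.find_spec hex
  have hmin : ∀ j, Ns ≤ j → j ≤ N0 → fa j = fa N0 → c ≤ j :=
    fun j h1 h2' h3 => Nat.find_le ⟨h1, h2', h3⟩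
  have hTO : fa 1 ≠ fa N0 := hAA 1 N0 le_rfl (by omega) (by omega) le_rfl (by omega)
  have hFT : ∀ j, 1 ≤ j → j < c → fa j ≠ fa N0 := by
    intro j h1 hlt
    by_cases hjNs : j < Ns
    · exact hAA j N0 h1 hjNs (by omega) le_rfl (by omega)
    · intro hq
      have := hmin j (by omega) (by omega) hq
      omega
  have hBO : ∀ j, Ns ≤ j → j < N0 → j ≠ N1 → c ≤ j → fb j = fa 1 := by
    intro j h1 h1' h3 hcj
    by_cases hcN1 : c = N1
    · omega
    by_cases hcN0' : c = N0
    · omega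
    have hbcO : fb c = fa 1 := by
      rcases hC2 c hcNs (by omega) hcN1 with h | h
      · exfalso
        rw [hcT] at h
        exact hAB N0 c (by omega) le_rfl hcNs (by omega) hcN1 (by omega) h.symm
      · exact h
    by_cases hjc : j = c
    · rw [hjc]; exact hbcO
    · rcases hC4 c j hcNs (by omega) hcN1 h1 h1' h3 (by omega)
        (fun k' hk' => by omega) with h | h
      · exfalso
        rw [hcT] at h
        exact hAB N0 c (by omega) le_rfl hcNs (by omega) hcN1 (by omega) h
      · rw [h, hbcO]
  have hAT : ∀ j, c ≤ j → j ≤ N0 → fa j = fa N0 := by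
    intro j h1 h2'
    by_cases hjc : j = c
    · rw [hjc]; exact hcT
    by_cases hcN0' : c = N0
    · omega
    by_cases hcN1' : c = N1
    · have : j = N0 := by omega
      rw [this]
    rcases hC1 c j hcNs (by omega) hcN1' (by omega) h2' with h | h
    · exfalso
      rw [hcT] at h
      exact hAB N0 c (by omega) le_rfl hcNs (by omega) hcN1' (by omega) h
    · rw [h, hcT]
  have hBA : ∀ j, Ns ≤ j → j < N0 → j ≠ N1 → j < c → fb j = fa j := by
    intro j h1 h1' h3 hlt
    rcases hC2 j h1 h1' h3 with h | h
    · exact h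
    · exfalso
      rcases hC1 j N0 h1 h1' h3 (by omega) le_rfl with h' | h'
      · exact hAA 1 j le_rfl (by omega) (by omega) (by omega) (by omega)
          (h'.trans h).symm
      · exact hFT j (by omega) hlt h'.symm
  have hAO : ∀ j, 2 ≤ j → j ≤ N0 → fa j ≠ fa 1 := by
    intro j hj1 hj2' hcon
    by_cases hjc : j < c
    · exact hAA 1 j le_rfl (by omega) (by omega) hj2' (by omega) hcon.symm
    · rw [hAT j (by omega) hj2'] at hcon
      exact hTO hcon.symm
  -- c is in the range of n
  have hcrange : ∃ t : Fin s, n t = c := by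
    by_cases h0 : c = N0
    · exact ⟨⟨0, by omega⟩, by rw [hN0 ⟨0, by omega⟩ rfl]; omega⟩
    by_cases h1 : c = N1
    · exact ⟨⟨1, by omega⟩, by rw [hN1 ⟨1, by omega⟩ rfl]; omega⟩
    by_cases hsx : c = Ns
    · exact ⟨⟨s-1, by omega⟩, by rw [hNs ⟨s-1, by omega⟩ rfl]; omega⟩
    by_contra hno
    push_neg at hno
    have hbc1 : c - 1 ≠ N1 := by omega
    rcases hC4 c (c-1) hcNs (by omega) h1 (by omega) (by omega) hbc1 (by omega)
      (fun k' hk' => by have := hno k'; omega) with h | h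
    · rw [hcT] at h
      exact hAB N0 c (by omega) le_rfl hcNs (by omega) h1 (by omega) h
    · have e1 := hBO c hcNs (by omega) h1 le_rfl
      have e2 := hBA (c-1) (by omega) (by omega) hbc1 (by omega)
      exact hAO (c-1) (by omega) (by omega) (by rw [← e2, h, e1])
  -- distinctness of colors below c
  have hdj : ∀ j j', 1 ≤ j → j < c → 1 ≤ j' → j' < c → j ≠ j' → fa j ≠ fa j' := by
    intro j j' h1 h1' h3 h4 h5
    by_cases hjNs : j < Ns
    · exact hAA j j' h1 hjNs h3 (by omega) h5
    by_cases hj'Ns : j' < Ns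
    · exact fun h => (hAA j' j h3 hj'Ns h1 (by omega) (by omega)) h.symm
    by_cases hj'N1 : j' = N1
    · have e := hBA j (by omega) (by omega) (by omega) h1'
      exact fun h => hAB j' j (by omega) (by omega) (by omega) (by omega) (by omega)
        (by omega) (h.symm.trans e.symm)
    · have e := hBA j' (by omega) (by omega) hj'N1 h4
      exact fun h => hAB j j' (by omega) (by omega) (by omega) (by omega) hj'N1 h5
        (h.trans e.symm)
  -- the number of colors equals c
  have hkc : k = c := by
    have hbij : Function.Bijective (fun i : Fin c => fa ((i : ℕ) + 1)) := by
      constructor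
      · intro i i' hii0
        have hii : fa ((i : ℕ) + 1) = fa ((i' : ℕ) + 1) := hii0
        by_contra hne
        have hne' : (i : ℕ) + 1 ≠ (i' : ℕ) + 1 := fun hcon => hne (Fin.ext (by omega))
        have hi1 := i.isLt
        have hi2 := i'.isLt
        by_cases hx1 : (i : ℕ) + 1 < c
        · by_cases hx2 : (i' : ℕ) + 1 < c
          · exact hdj _ _ (by omega) hx1 (by omega) hx2 hne' hii
          · have hq : (i' : ℕ) + 1 = c := by omega
            rw [hq] at hii
            exact hFT _ (by omega) hx1 (hii.trans hcT)
        · have hq : (i : ℕ) + 1 = c := by omega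
          have hx2 : (i' : ℕ) + 1 < c := by omega
          rw [hq] at hii
          exact hFT _ (by omega) hx2 (hii.symm.trans hcT)
      · intro y
        obtain ⟨u, hu⟩ := hf.1 y
        have hrep : ∃ i, 1 ≤ i ∧ i ≤ c ∧ f u = fa i := by
          rcases exhaust hs hanti hN0 hN1 hNs h2 heq u.2 with
            ⟨j, hj1, hj2, hval⟩ | ⟨j, hj1, hj2, hj3, hval⟩
          · have hu' : u = av n N1 j := Subtype.ext (by rw [hval, haval hj1 hj2])
            by_cases hjc : j < c
            · exact ⟨j, hj1, by omega, by rw [hu']⟩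
            · refine ⟨c, by omega, le_rfl, ?_⟩
              rw [hu']
              show fa j = fa c
              rw [hAT j (by omega) hj2, hcT]
          · have hu' : u = bv n N1 j := Subtype.ext (by rw [hval, hbval hj1 hj2 hj3])
            by_cases hjc : j < c
            · exact ⟨j, by omega, by omega, by rw [hu']; exact hBA j hj1 hj2 hj3 hjc⟩
            · exact ⟨1, le_rfl, by omega, by rw [hu']; exact hBO j hj1 hj2 hj3 (by omega)⟩
        obtain ⟨i, hi1, hi2, hi3⟩ := hrep
        refine ⟨⟨i - 1, by omega⟩, ?_⟩
        show fa (i - 1 + 1) = y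
        rw [show i - 1 + 1 = i from by omega, ← hi3, hu]
    have := Fintype.card_of_bijective hbij
    simpa using this.symm
  -- conclusion
  obtain ⟨t, hnt⟩ := hcrange
  refine ⟨t, by omega, ?_⟩
  have hAvt : ∀ j, Av n j t = if c ≤ j then c else j := by
    intro j
    simp only [Av, hnt]
  have hBvt : ∀ j, Bv n j t = if c ≤ j then 1 else j := by
    intro j
    simp only [Bv, hnt]
  -- the three iff building blocks
  have hAAiff : ∀ j j', 1 ≤ j → j ≤ N0 → 1 ≤ j' → j' ≤ N0 →
      (fa j = fa j' ↔ Av n j t = Av n j' t) := by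
    intro j j' h1 h1' h3 h4
    rw [hAvt, hAvt]
    split_ifs with hx1 hx2 hx2
    · exact ⟨fun _ => rfl, fun _ => (hAT j hx1 h1').trans (hAT j' hx2 h4).symm⟩
    · constructor
      · intro hq
        exact absurd ((hq.symm.trans (hAT j hx1 h1'))) (hFT j' h3 (by omega))
      · intro hq; omega
    · constructor
      · intro hq
        exact absurd ((hq.trans (hAT j' hx2 h4))) (hFT j h1 (by omega))
      · intro hq; omega
    · constructor
      · intro hq
        by_contra hne
        exact hdj j j' h1 (by omega) h3 (by omega) hne hq
      · intro hq; rw [hq]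
  have hABiff : ∀ j j', 1 ≤ j → j ≤ N0 → Ns ≤ j' → j' < N0 → j' ≠ N1 →
      (fa j = fb j' ↔ Av n j t = Bv n j' t) := by
    intro j j' h1 h1' h3 h4 h5
    rw [hAvt, hBvt]
    split_ifs with hx1 hx2 hx2
    · constructor
      · intro hq
        rw [hAT j hx1 h1', hBO j' h3 h4 h5 hx2] at hq
        exact absurd hq.symm hTO
      · intro hq; omega
    · constructor
      · intro hq
        rw [hAT j hx1 h1', hBA j' h3 h4 h5 (by omega)] at hq
        exact absurd hq.symm (hFT j' (by omega) (by omega))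
      · intro hq; omega
    · constructor
      · intro hq
        rw [hBO j' h3 h4 h5 hx2] at hq
        by_contra hne
        exact hAO j (by omega) h1' hq
      · intro hq
        rw [hq, hBO j' h3 h4 h5 hx2]
    · constructor
      · intro hq
        rw [hBA j' h3 h4 h5 (by omega)] at hq
        by_contra hne
        exact hdj j j' h1 (by omega) (by omega) (by omega) hne hq
      · intro hq
        rw [hq, hBA j' h3 h4 h5 (by omega)]
  have hBBiff : ∀ j j', Ns ≤ j → j < N0 → j ≠ N1 → Ns ≤ j' → j' < N0 → j' ≠ N1 →
      (fb j = fb j' ↔ Bv n j t = Bv n j' t) := by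
    intro j j' h1 h1' h3 h4 h5 h6
    rw [hBvt, hBvt]
    split_ifs with hx1 hx2 hx2
    · exact ⟨fun _ => rfl, fun _ => (hBO j h1 h1' h3 hx1).trans (hBO j' h4 h5 h6 hx2).symm⟩
    · constructor
      · intro hq
        rw [hBO j h1 h1' h3 hx1, hBA j' h4 h5 h6 (by omega)] at hq
        exact absurd hq.symm (hAO j' (by omega) (by omega))
      · intro hq; omega
    · constructor
      · intro hq
        rw [hBA j h1 h1' h3 (by omega), hBO j' h4 h5 h6 hx2] at hq
        exact absurd hq (hAO j (by omega) (by omega))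
      · intro hq; omega
    · rw [hBA j h1 h1' h3 (by omega), hBA j' h4 h5 h6 (by omega)]
      constructor
      · intro hq
        by_contra hne
        exact hdj j j' (by omega) (by omega) (by omega) (by omega) hne hq
      · intro hq; rw [hq]
  intro u v
  rcases exhaust hs hanti hN0 hN1 hNs h2 heq u.2 with
    ⟨j, hj1, hj2, hval⟩ | ⟨j, hj1, hj2, hj3, hval⟩ <;>
    rcases exhaust hs hanti hN0 hN1 hNs h2 heq v.2 with
      ⟨j', hj1', hj2', hval'⟩ | ⟨j', hj1', hj2', hj3', hval'⟩
  · have hu' : u = av n N1 j := Subtype.ext (by rw [hval, haval hj1 hj2])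
    have hv' : v = av n N1 j' := Subtype.ext (by rw [hval', haval hj1' hj2'])
    rw [hval, hval', hu', hv']
    exact hAAiff j j' hj1 hj2 hj1' hj2'
  · have hu' : u = av n N1 j := Subtype.ext (by rw [hval, haval hj1 hj2])
    have hv' : v = bv n N1 j' := Subtype.ext (by rw [hval', hbval hj1' hj2' hj3'])
    rw [hval, hval', hu', hv']
    exact hABiff j j' hj1 hj2 hj1' hj2' hj3'
  · have hu' : u = bv n N1 j := Subtype.ext (by rw [hval, hbval hj1 hj2 hj3])
    have hv' : v = av n N1 j' := Subtype.ext (by rw [hval', haval hj1' hj2'])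
    rw [hval, hval', hu', hv']
    have := hABiff j' j hj1' hj2' hj1 hj2 hj3
    constructor
    · intro hq; exact (this.mp hq.symm).symm
    · intro hq; exact (this.mpr hq.symm).symm
  · have hu' : u = bv n N1 j := Subtype.ext (by rw [hval, hbval hj1 hj2 hj3])
    have hv' : v = bv n N1 j' := Subtype.ext (by rw [hval', hbval hj1' hj2' hj3'])
    rw [hval, hval', hu', hv']
    exact hBBiff j j' hj1 hj2 hj3 hj1' hj2' hj3'

end
end HRZ
namespace HRZ
section
variable {s : ℕ} {n : Fin s → ℕ} {N0 N1 Ns : ℕ}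
variable (hs : 2 ≤ s) (hanti : StrictAnti n)
  (hN0 : ∀ k : Fin s, (k : ℕ) = 0 → n k = N0)
  (hN1 : ∀ k : Fin s, (k : ℕ) = 1 → n k = N1)
  (hNs : ∀ k : Fin s, (k : ℕ) = s - 1 → n k = Ns)
  (h2 : 2 ≤ Ns) (heq : N0 = N1 + 1)
include hs hanti hN0 hN1 hNs h2 heq

lemma coord_feasible (t : Fin s) : (n t) ∈ FeasibleSet (HstarOn (XD s n N1)) := by
  classical
  have hnt2 := nk2 hs hanti hN0 hN1 hNs h2 heq t
  have hcr : ∀ x : ↥(XD s n N1), 1 ≤ (x : Fin s → ℕ) t ∧ (x : Fin s → ℕ) t ≤ n t := by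
    intro x
    rcases exhaust hs hanti hN0 hN1 hNs h2 heq x.2 with
      ⟨j, hj1, hj2, hval⟩ | ⟨j, hj1, hj2, hj3, hval⟩
    · rw [hval]; simp only [Av]; split <;> omega
    · rw [hval]; simp only [Bv]; split <;> omega
  refine ⟨fun x => ⟨min ((x : Fin s → ℕ) t - 1) (n t - 1), by omega⟩, ?_, ?_, ?_⟩
  · -- surjectivity
    intro y
    have hy := y.isLt
    have hub' := ub hs hanti hN0 hN1 hNs h2 heq t
    refine ⟨⟨Av n ((y : ℕ) + 1), memA hs hanti hN0 hN1 hNs h2 heq (by omega) (by omega)⟩, ?_⟩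
    apply Fin.ext
    show min ((Av n ((y : ℕ) + 1)) t - 1) (n t - 1) = (y : ℕ)
    have hv : Av n ((y : ℕ) + 1) t = (y : ℕ) + 1 := by simp only [Av]; split <;> omega
    rw [hv]; omega
  · -- C edges
    rintro e ⟨u, v, w, huv, huw, hvw, rfl, hcard⟩
    rcases card2_cases (hcard t) with h | h | h
    · exact ⟨u, by simp, v, by simp, huv,
        Fin.ext (show min ((u : Fin s → ℕ) t - 1) (n t - 1)
          = min ((v : Fin s → ℕ) t - 1) (n t - 1) from by rw [h])⟩
    · exact ⟨u, by simp, w, by simp, huw,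
        Fin.ext (show min ((u : Fin s → ℕ) t - 1) (n t - 1)
          = min ((w : Fin s → ℕ) t - 1) (n t - 1) from by rw [h])⟩
    · exact ⟨v, by simp, w, by simp, hvw,
        Fin.ext (show min ((v : Fin s → ℕ) t - 1) (n t - 1)
          = min ((w : Fin s → ℕ) t - 1) (n t - 1) from by rw [h])⟩
  · -- D edges
    rintro e ⟨u, v, rfl, hne⟩
    have hu := hcr u
    have hv := hcr v
    have h := hne t
    refine ⟨u, by simp, v, by simp, fun hc => h (by rw [hc]), ?_⟩
    intro hc
    have h2' : min ((u : Fin s → ℕ) t - 1) (n t - 1) = min ((v : Fin s → ℕ) t - 1) (n t - 1) :=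
      congrArg Fin.val hc
    omega

lemma onereal : IsOneRealization (HstarOn (XD s n N1)) (Set.range n) := by
  constructor
  · ext m
    constructor
    · rintro ⟨f, hf⟩
      obtain ⟨t, hnt, -⟩ := key hs hanti hN0 hN1 hNs h2 heq hf
      exact ⟨t, hnt⟩
    · rintro ⟨t, rfl⟩
      exact coord_feasible hs hanti hN0 hN1 hNs h2 heq t
  · intro m f g hfc hgc
    obtain ⟨t, hnt, hft⟩ := key hs hanti hN0 hN1 hNs h2 heq hfc
    obtain ⟨t', hnt', hgt⟩ := key hs hanti hN0 hN1 hNs h2 heq hgc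
    have htt : t = t' := hanti.injective (by omega)
    intro u v
    rw [hft u v, hgt u v, htt]

end
end HRZ

/-- if `n₁ = n₂ + 1` and `2 ≤ n_s < ⋯ < n₂`, the derived
sub-hypergraph `H''` of `H*_{n₁,…,n_s}` on `X'' = X* \ {(n₂,1,…,1)}` is a
one-realization of `S = {n₁,…,n_s}` and has `2n₁ - n_s - 1` vertices. -/
theorem Hstar_deleted_one_realization (s : ℕ) (hs : 2 ≤ s) (n : Fin s → ℕ)
    (hanti : StrictAnti n) (h2 : 2 ≤ n ⟨s - 1, by omega⟩)
    (heq : n ⟨0, by omega⟩ = n ⟨1, by omega⟩ + 1) :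
    (XstarGen s n \ {fun k : Fin s => if (k : ℕ) = 0 then n ⟨1, by omega⟩ else 1}).ncard
        = 2 * n ⟨0, by omega⟩ - n ⟨s - 1, by omega⟩ - 1 ∧
    IsOneRealization
      (HstarOn (XstarGen s n \ {fun k : Fin s => if (k : ℕ) = 0 then n ⟨1, by omega⟩ else 1}))
      (Set.range n) := by
  have hN0 : ∀ k : Fin s, (k : ℕ) = 0 → n k = n ⟨0, by omega⟩ := by
    intro k hk
    have : k = ⟨0, by omega⟩ := Fin.ext hk
    rw [this]
  have hN1 : ∀ k : Fin s, (k : ℕ) = 1 → n k = n ⟨1, by omega⟩ := by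
    intro k hk
    have : k = ⟨1, by omega⟩ := Fin.ext hk
    rw [this]
  have hNs : ∀ k : Fin s, (k : ℕ) = s - 1 → n k = n ⟨s - 1, by omega⟩ := by
    intro k hk
    have : k = ⟨s - 1, by omega⟩ := Fin.ext hk
    rw [this]
  constructor
  · exact HRZ.XD_ncard hs hanti hN0 hN1 hNs h2 heq
  · exact HRZ.onereal hs hanti hN0 hN1 hNs h2 heq
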